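/- arXiv:2409.20479 — 11 statements merged into one kernel-verified Lean document; each statement's English description precedes it below -/
import Mathlib

section
/- Let X be a non-empty set and ▷ a binary operation on X, and suppose the map ř : X × X → X × X defined by ř(a,b) = (b, b ▷ a) is a bijective set-theoretic solution of the braid equation. Then (X, ▷) is a left rack: ▷ is left self-distributive and, for every b ∈ X, the map a ↦ b ▷ a is a bijection of X. -/
/-- The action of a map `f : X × X → X × X` on the first two factors of `X × X × X`. -/
def braidLeft {X : Type*} (f : X × X → X × X) : X × X × X → X × X × X :=
  fun p => ((f (p.1, p.2.1)).1, (f (p.1, p.2.1)).2, p.2.2)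

/-- The action of a map `f : X × X → X × X` on the last two factors of `X × X × X`. -/
def braidRight {X : Type*} (f : X × X → X × X) : X × X × X → X × X × X :=
  fun p => (p.1, f p.2)

/-- `f` is a set-theoretic solution of the braid equation. -/
def IsBraidSolution {X : Type*} (f : X × X → X × X) : Prop :=
  braidLeft f ∘ braidRight f ∘ braidLeft f = braidRight f ∘ braidLeft f ∘ braidRight f

/-- if `ř(a,b) = (b, b ▷ a)` is a bijective solution of the braid equation,
then `(X, ▷)` is a left rack: `▷` is left self-distributive and every left
translation `a ↦ b ▷ a` is a bijection. -/
theorem stmt_1 {X : Type*} [Nonempty X] (t : X → X → X)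
    (hbij : Function.Bijective (fun p : X × X => (p.2, t p.2 p.1)))
    (hbraid : IsBraidSolution (fun p : X × X => (p.2, t p.2 p.1))) :
    (∀ a b c : X, t a (t b c) = t (t a b) (t a c)) ∧
      ∀ b : X, Function.Bijective (t b) := by
  constructor
  · intro a b c
    have := congrFun hbraid (c, b, a)
    simp only [IsBraidSolution, braidLeft, braidRight, Function.comp_apply] at this ⊢
    simpa using (Prod.ext_iff.1 (Prod.ext_iff.1 this).2).2
  · intro b
    constructor
    · intro x y hxy
      have := hbij.1 (a₁ := (x, b)) (a₂ := (y, b)) (by simp [hxy])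
      exact (Prod.ext_iff.1 this).1
    · intro y
      obtain ⟨⟨a, b'⟩, hab⟩ := hbij.2 (b, y)
      simp only [Prod.mk.injEq] at hab
      exact ⟨a, by rw [← hab.1]; exact hab.2⟩
end

section
/- Let (X, +, ∘) be a left skew brace. Define σ_a(b) := -a + a∘b and τ_b(a) := σ_a(b)⁻¹ ∘ a ∘ b (the inverse taken in the group (X, ∘)), so that a∘b = σ_a(b) ∘ τ_b(a) for all a, b ∈ X. Then the map r : X × X → X × X defined by r(b,a) = (σ_a(b), τ_b(a)) is a set-theoretic solution of the Yang–Baxter equation r₁₂ ∘ r₁₃ ∘ r₂₃ = r₂₃ ∘ r₁₃ ∘ r₁₂. -/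
/-- Action of `f : X × X → X × X` on factors 1,2 of `X × X × X`. -/
def yb12 {X : Type*} (f : X × X → X × X) : X × X × X → X × X × X :=
  fun p => ((f (p.1, p.2.1)).1, (f (p.1, p.2.1)).2, p.2.2)

/-- Action of `f : X × X → X × X` on factors 1,3 of `X × X × X`. -/
def yb13 {X : Type*} (f : X × X → X × X) : X × X × X → X × X × X :=
  fun p => ((f (p.1, p.2.2)).1, p.2.1, (f (p.1, p.2.2)).2)

/-- Action of `f : X × X → X × X` on factors 2,3 of `X × X × X`. -/
def yb23 {X : Type*} (f : X × X → X × X) : X × X × X → X × X × X :=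
  fun p => (p.1, f p.2)

/-- `f` is a set-theoretic solution of the Yang–Baxter equation
`r₁₂ ∘ r₁₃ ∘ r₂₃ = r₂₃ ∘ r₁₃ ∘ r₁₂`. -/
def IsYBSolution {X : Type*} (f : X × X → X × X) : Prop :=
  yb12 f ∘ yb13 f ∘ yb23 f = yb23 f ∘ yb13 f ∘ yb12 f

/-- Let `(X, +, ∘)` be a left skew brace, where `∘` is the group
operation `*` of the `Group X` instance and the (not necessarily abelian)
additive group structure is given by `add`, `neg`, `zero`.  With
`σ_a(b) := -a + a∘b` and `τ_b(a) := σ_a(b)⁻¹ ∘ a ∘ b` (so that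
`a∘b = σ_a(b) ∘ τ_b(a)`), the map `r(b,a) = (σ_a(b), τ_b(a))` is a
set-theoretic solution of the Yang–Baxter equation. -/
theorem stmt_3 {X : Type*} [Group X]
    (add : X → X → X) (neg : X → X) (zero : X)
    (hassoc : ∀ a b c : X, add (add a b) c = add a (add b c))
    (hzero_add : ∀ a : X, add zero a = a)
    (hadd_zero : ∀ a : X, add a zero = a)
    (hneg_add : ∀ a : X, add (neg a) a = zero)
    (hadd_neg : ∀ a : X, add a (neg a) = zero)
    (hdist : ∀ a b c : X, a * add b c = add (add (a * b) (neg a)) (a * c))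
    (σ τ : X → X → X)
    (hσ : ∀ a b : X, σ a b = add (neg a) (a * b))
    (hτ : ∀ b a : X, τ b a = (σ a b)⁻¹ * a * b)
    (hfact : ∀ a b : X, a * b = σ a b * τ b a) :
    IsYBSolution (fun p : X × X => (σ p.2 p.1, τ p.1 p.2)) := by
  -- left cancellation in the additive group
  have hcancel : ∀ a x y : X, add a x = add a y → x = y := by
    intro a x y h
    have h2 := congrArg (add (neg a)) h
    rwa [← hassoc, ← hassoc, hneg_add, hzero_add, hzero_add] at h2
  -- uniqueness of additive inverses
  have hinv_unique : ∀ p u : X, add p u = zero → u = neg p := by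
    intro p u h
    have : add p u = add p (neg p) := by rw [h, hadd_neg]
    exact hcancel _ _ _ this
  -- a ∘ 0 = a
  have hmulzero : ∀ a : X, a * zero = a := by
    intro a
    have h := hdist a zero zero
    rw [hzero_add] at h
    have h2 : add (a * zero) zero = add (a * zero) (add (neg a) (a * zero)) := by
      rw [hadd_zero, ← hassoc]; exact h
    have h3 := hcancel _ _ _ h2
    have h4 : add (neg a) (a * zero) = add (neg a) a := by rw [hneg_add]; exact h3.symm
    exact hcancel _ _ _ h4
  -- a ∘ b = a + σ a b
  have hmul : ∀ a b : X, a * b = add a (σ a b) := by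
    intro a b; rw [hσ a b, ← hassoc, hadd_neg, hzero_add]
  -- σ a is additive
  have hF4 : ∀ a b c : X, σ a (add b c) = add (σ a b) (σ a c) := by
    intro a b c
    rw [hσ a (add b c), hσ a b, hσ a c, hdist a b c,
      hassoc (a * b) (neg a) (a * c), hassoc (neg a) (a * b) (add (neg a) (a * c))]
  -- key for negation: (a∘b - a) + a∘(-b) = a
  have hkey : ∀ a b : X, add (add (a * b) (neg a)) (a * neg b) = a := by
    intro a b
    have h := hdist a b (neg b)
    rw [hadd_neg, hmulzero] at h
    exact h.symm
  -- σ is a homomorphism from (X,∘) to maps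
  have hF3 : ∀ a b c : X, σ (a * b) c = σ a (σ b c) := by
    intro a b c
    have hneg' : add (neg a) (add (a * neg b) (neg a)) = neg (a * b) := by
      apply hinv_unique
      calc add (a * b) (add (neg a) (add (a * neg b) (neg a)))
          = add (add (add (a * b) (neg a)) (a * neg b)) (neg a) := by
            rw [hassoc, hassoc]
        _ = add a (neg a) := by rw [hkey a b]
        _ = zero := hadd_neg a
    rw [hσ (a * b) c, hσ a (σ b c), hσ b c, hdist a (neg b) (b * c), ← mul_assoc,
      ← hneg', hassoc]
  -- M1: σ a (b∘c) = σ a b + σ (a∘b) c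
  have hM1 : ∀ a b c : X, σ a (b * c) = add (σ a b) (σ (a * b) c) := by
    intro a b c
    conv_lhs => rw [hmul b c]
    rw [hF4 a b (σ b c), hF3 a b c]
  -- σ a b ∘ τ b a = a ∘ b
  have hστ : ∀ a b : X, σ a b * τ b a = a * b := by
    intro a b; rw [hτ b a]; group
  -- two key identities, both sides equal σ z (y ∘ x)
  have hKEY1 : ∀ x y z : X, σ z y * σ (τ y z) x = σ z (y * x) := by
    intro x y z
    rw [hmul (σ z y) (σ (τ y z) x), ← hF3 (σ z y) (τ y z) x, hστ z y, ← hM1 z y x]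
  have hKEY2 : ∀ x y z : X,
      σ (z * y) x * σ (τ (σ y x) z) (τ x y) = σ z (y * x) := by
    intro x y z
    rw [hmul (σ (z * y) x) (σ (τ (σ y x) z) (τ x y)),
      ← hF3 (σ (z * y) x) (τ (σ y x) z) (τ x y), hF3 z y x, hστ z (σ y x),
      ← hM1 z (σ y x) (τ x y), hστ y x]
  have hkeys : ∀ x y z : X,
      σ z y * σ (τ y z) x = σ (z * y) x * σ (τ (σ y x) z) (τ x y) := by
    intro x y z; exact (hKEY1 x y z).trans (hKEY2 x y z).symm
  -- the three coordinate equations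
  have hE1 : ∀ x y z : X, σ (σ z y) (σ (τ y z) x) = σ z (σ y x) := by
    intro x y z
    rw [← hF3 (σ z y) (τ y z) x, hστ z y, hF3 z y x]
  have hE2 : ∀ x y z : X,
      τ (σ (τ y z) x) (σ z y) = σ (τ (σ y x) z) (τ x y) := by
    intro x y z
    rw [hτ (σ (τ y z) x) (σ z y), ← hF3 (σ z y) (τ y z) x, hστ z y,
      mul_assoc, hkeys x y z, inv_mul_cancel_left]
  have hE3 : ∀ x y z : X,
      τ x (τ y z) = τ (τ x y) (τ (σ y x) z) := by
    intro x y z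
    have hCB : σ (τ (σ y x) z) (τ x y) =
        (σ (z * y) x)⁻¹ * (σ z y * σ (τ y z) x) := by
      rw [hkeys x y z, inv_mul_cancel_left]
    rw [hτ x (τ y z), hτ (τ x y) (τ (σ y x) z), hCB, hτ y z, hτ (σ y x) z,
      hτ x y, ← hF3 z y x]
    group
  -- assemble
  unfold IsYBSolution
  funext p
  obtain ⟨x, y, z⟩ := p
  simp only [yb12, yb13, yb23, Function.comp_apply]
  exact Prod.ext (hE1 x y z) (Prod.ext (hE2 x y z) (hE3 x y z))
end

section
/- Let k be a field, V a k-vector space, and ř a linear endomorphism of V ⊗ V satisfying the braid relation (ř ⊗ id)(id ⊗ ř)(ř ⊗ id) = (id ⊗ ř)(ř ⊗ id)(id ⊗ ř) on V ⊗ V ⊗ V and the involutivity condition ř ∘ ř = id. Let P be the flip operator on V ⊗ V (P(v ⊗ w) = w ⊗ v) and for λ ∈ k define R(λ) := λ·(P ∘ ř) + P. Then the unitarity property holds: R(λ) ∘ (P ∘ R(-λ) ∘ P) = (1 - λ²)·id on V ⊗ V. -/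
open TensorProduct

/-- The endomorphism of `V ⊗ V ⊗ V` acting as `f` on the first two tensor
factors and as the identity on the third. -/
noncomputable def tensor12 (k : Type*) [Field k] (V : Type*) [AddCommGroup V] [Module k V]
    (f : V ⊗[k] V →ₗ[k] V ⊗[k] V) : V ⊗[k] (V ⊗[k] V) →ₗ[k] V ⊗[k] (V ⊗[k] V) :=
  (TensorProduct.assoc k V V V).toLinearMap ∘ₗ
    TensorProduct.map f LinearMap.id ∘ₗ (TensorProduct.assoc k V V V).symm.toLinearMap

/-- The endomorphism of `V ⊗ V ⊗ V` acting as `f` on the last two tensor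
factors and as the identity on the first. -/
noncomputable def tensor23 (k : Type*) [Field k] (V : Type*) [AddCommGroup V] [Module k V]
    (f : V ⊗[k] V →ₗ[k] V ⊗[k] V) : V ⊗[k] (V ⊗[k] V) →ₗ[k] V ⊗[k] (V ⊗[k] V) :=
  TensorProduct.map LinearMap.id f

/-! In the endomorphism algebra, with `p` the flip and `r = rb`, both square to `1`. Then
`p R(-λ) p = p - λ r p`, and in the product with `R(λ) = λ p r + p` the cross terms `± λ p r p`
cancel while `p r r p = 1`, leaving `(1 - λ²) · 1`. -/

section Baxterization

variable {k A : Type*} [CommRing k] [Ring A] [Algebra k A] {p r : A}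

theorem flip_conj_baxterization_neg (hp : p * p = 1) (a : k) :
    p * (((-a) • (p * r) + p) * p) = p - a • (r * p) := by
  rw [add_mul, mul_add, smul_mul_assoc, mul_smul_comm, ← mul_assoc, ← mul_assoc, hp, one_mul,
    mul_one, neg_smul]
  abel

theorem baxterization_mul_flip_conj_neg (hp : p * p = 1) (hr : r * r = 1) (a : k) :
    (a • (p * r) + p) * (p * (((-a) • (p * r) + p) * p)) = (1 - a ^ 2) • 1 := by
  have hprrp : p * r * (r * p) = 1 := by rw [mul_assoc, ← mul_assoc r, hr, one_mul, hp]
  rw [flip_conj_baxterization_neg hp, add_mul, mul_sub, mul_sub, hp, smul_mul_assoc,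
    smul_mul_assoc, mul_smul_comm, mul_smul_comm, hprrp, ← mul_assoc]
  module

end Baxterization

theorem stmt_6_general {k : Type*} [Field k] {V : Type*} [AddCommGroup V] [Module k V]
    (rb : V ⊗[k] V →ₗ[k] V ⊗[k] V)
    (hinvol : rb ∘ₗ rb = LinearMap.id)
    (P : V ⊗[k] V →ₗ[k] V ⊗[k] V)
    (hP : P = (TensorProduct.comm k V V).toLinearMap)
    (R : k → (V ⊗[k] V →ₗ[k] V ⊗[k] V))
    (hR : ∀ lam : k, R lam = lam • (P ∘ₗ rb) + P) :
    ∀ lam : k, R lam ∘ₗ (P ∘ₗ R (-lam) ∘ₗ P) = (1 - lam ^ 2) • LinearMap.id := by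
  intro lam
  have hPP : P * P = 1 := by rw [hP]; exact TensorProduct.comm_comp_comm k V V
  rw [hR, hR]
  exact baxterization_mul_flip_conj_neg hPP hinvol lam

/-- for an involutive solution `rb` of the braid relation, the
Baxterized matrix `R(λ) = λ (P ∘ rb) + P` satisfies the unitarity property
`R(λ) ∘ (P ∘ R(-λ) ∘ P) = (1 - λ²) id`. -/
theorem stmt_6 {k : Type*} [Field k] {V : Type*} [AddCommGroup V] [Module k V]
    (rb : V ⊗[k] V →ₗ[k] V ⊗[k] V)
    (hbraid : tensor12 k V rb ∘ₗ tensor23 k V rb ∘ₗ tensor12 k V rb =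
      tensor23 k V rb ∘ₗ tensor12 k V rb ∘ₗ tensor23 k V rb)
    (hinvol : rb ∘ₗ rb = LinearMap.id)
    (P : V ⊗[k] V →ₗ[k] V ⊗[k] V)
    (hP : P = (TensorProduct.comm k V V).toLinearMap)
    (R : k → (V ⊗[k] V →ₗ[k] V ⊗[k] V))
    (hR : ∀ lam : k, R lam = lam • (P ∘ₗ rb) + P) :
    ∀ lam : k, R lam ∘ₗ (P ∘ₗ R (-lam) ∘ₗ P) = (1 - lam ^ 2) • LinearMap.id :=
  stmt_6_general rb hinvol P hP R hR
end

section
/- Let X be a finite set, k a field, and σ, τ : X → X maps with σ(τ(x)) = τ(σ(x)) = x for all x ∈ X. Let ř = Σ_{x,y∈X} e_{x,σ(y)} ⊗ e_{y,τ(x)} (Lyubashenko's solution) as a matrix on the tensor square. Then for all x, y ∈ X the matrix ř commutes with both twisted coproducts: ř·(e_{σ(x),σ(y)} ⊗ 1 + 1 ⊗ e_{x,y}) = (e_{σ(x),σ(y)} ⊗ 1 + 1 ⊗ e_{x,y})·ř and ř·(e_{x,y} ⊗ 1 + 1 ⊗ e_{τ(x),τ(y)}) = (e_{x,y} ⊗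 1 + 1 ⊗ e_{τ(x),τ(y)})·ř. -/
/-!
Lyubashenko's solution is the permutation matrix of `(p, q) ↦ (σ q, σ⁻¹ p)`, i.e. the flip
followed by `σ ⊗ σ⁻¹`. Hence conjugating by it sends `A ⊗ B` to `σ B σ⁻¹ ⊗ σ⁻¹ A σ`, so it
exchanges the two summands `e_{a,b} ⊗ 1` and `1 ⊗ e_{σ⁻¹ a, σ⁻¹ b}` of a twisted coproduct.
-/

open Kronecker Matrix

namespace Lyubashenko

variable {X : Type*} [Fintype X] [DecidableEq X] {R : Type*} [CommSemiring R]

def flipEquiv (σ : Equiv.Perm X) : X × X ≃ X × X :=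
  (Equiv.prodComm X X).trans (σ.prodCongr σ.symm)

theorem sum_single_kronecker_single (σ : Equiv.Perm X) :
    ∑ x : X, ∑ y : X, single x (σ y) (1 : R) ⊗ₖ single y (σ.symm x) (1 : R) =
      (flipEquiv σ).toPEquiv.toMatrix := by
  ext ⟨p, q⟩ ⟨c, d⟩
  simp only [Matrix.sum_apply, kroneckerMap_apply, single_apply, eq_comm, ite_and,
    Equiv.eq_symm_apply, mul_ite, mul_one, mul_zero, Finset.sum_ite_eq, Finset.mem_univ,
    ↓reduceIte, Finset.sum_ite_eq', flipEquiv, PEquiv.toMatrix_apply, Equiv.toPEquiv_apply,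
    Equiv.trans_apply, Equiv.prodComm_apply, Prod.swap_prod_mk, Equiv.prodCongr_apply,
    Prod.map_apply, Option.mem_def, Option.some.injEq, Prod.ext_iff]
  split_ifs <;> rfl

theorem toMatrix_flipEquiv_mul_kronecker (σ : Equiv.Perm X) (A B : Matrix X X R) :
    (flipEquiv σ).toPEquiv.toMatrix * (A ⊗ₖ B) =
      (B.submatrix σ.symm σ.symm ⊗ₖ A.submatrix σ σ) * (flipEquiv σ).toPEquiv.toMatrix := by
  rw [PEquiv.toMatrix_toPEquiv_mul, PEquiv.mul_toMatrix_toPEquiv]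
  ext ⟨p, q⟩ ⟨r, s⟩
  simp [flipEquiv, mul_comm]

theorem commute_toMatrix_flipEquiv (σ : Equiv.Perm X) (a b : X) :
    Commute (flipEquiv σ).toPEquiv.toMatrix
      (single a b (1 : R) ⊗ₖ (1 : Matrix X X R) +
        (1 : Matrix X X R) ⊗ₖ single (σ.symm a) (σ.symm b) 1) := by
  rw [Commute, SemiconjBy, Matrix.mul_add, Matrix.add_mul, toMatrix_flipEquiv_mul_kronecker,
    toMatrix_flipEquiv_mul_kronecker, add_comm]
  simp [submatrix_one_equiv]

end Lyubashenko

/-- Lyubashenko's solution `rb = Σ_{x,y} e_{x,σ(y)} ⊗ e_{y,τ(x)}`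
commutes with the twisted coproducts
`Δ₁(e_{x,y}) = e_{σ(x),σ(y)} ⊗ 1 + 1 ⊗ e_{x,y}` and
`Δ₂(e_{x,y}) = e_{x,y} ⊗ 1 + 1 ⊗ e_{τ(x),τ(y)}`. -/
theorem stmt_9 {k : Type*} [Field k] {X : Type*} [Fintype X] [DecidableEq X]
    (σ τ : X → X) (hστ : ∀ x, σ (τ x) = x) (hτσ : ∀ x, τ (σ x) = x)
    (rb : Matrix (X × X) (X × X) k)
    (hrb : rb = ∑ x : X, ∑ y : X,
      (Matrix.single x (σ y) 1) ⊗ₖ (Matrix.single y (τ x) (1 : k))) :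
    ∀ x y : X,
      (rb * ((Matrix.single (σ x) (σ y) 1) ⊗ₖ (1 : Matrix X X k) +
          (1 : Matrix X X k) ⊗ₖ (Matrix.single x y 1)) =
        ((Matrix.single (σ x) (σ y) 1) ⊗ₖ (1 : Matrix X X k) +
          (1 : Matrix X X k) ⊗ₖ (Matrix.single x y 1)) * rb) ∧
      (rb * ((Matrix.single x y 1) ⊗ₖ (1 : Matrix X X k) +
          (1 : Matrix X X k) ⊗ₖ (Matrix.single (τ x) (τ y) 1)) =
        ((Matrix.single x y 1) ⊗ₖ (1 : Matrix X X k) +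
          (1 : Matrix X X k) ⊗ₖ (Matrix.single (τ x) (τ y) 1)) * rb) := by
  let s : Equiv.Perm X := ⟨σ, τ, hτσ, hστ⟩
  have hrb' : rb = (Lyubashenko.flipEquiv s).toPEquiv.toMatrix :=
    hrb.trans (Lyubashenko.sum_single_kronecker_single s)
  intro x y
  subst hrb'
  refine ⟨?_, Lyubashenko.commute_toMatrix_flipEquiv s x y⟩
  simpa [s, hτσ] using (Lyubashenko.commute_toMatrix_flipEquiv (R := k) s (σ x) (σ y)).eq
end

section
/- Let k be a field, X a finite set, A a unital associative k-algebra, and suppose A carries a rack algebra structure: invertible elements q_a ∈ A and elements h_a ∈ A for each a ∈ X with a ↦ h_a injective, and a binary operation ▷ on X, satisfying q_a q_b = q_b q_{b▷a}, h_a h_b = δ_{a,b} h_a, and q_b h_{b▷a} = h_a q_b for all a, b ∈ X. Then (X, ▷) is a left rack: c ▷ (b ▷ a) = (c ▷ b) ▷ (c ▷ a) for all a, b, c ∈ X, and for every a ∈ X the map b ↦ a ▷ b is a bijection of X. -/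
/-- a rack algebra structure on a unital associative `k`-algebra `A`
(over a finite set `X`) forces `(X, ▷)` to be a left rack: `▷` is left
self-distributive and all left translations are bijective.  Here `t b a`
denotes `b ▷ a`. -/
theorem stmt_10 {k X A : Type*} [Field k] [Fintype X] [DecidableEq X]
    [Ring A] [Algebra k A]
    (q qinv h : X → A) (t : X → X → X)
    (hq : ∀ a, q a * qinv a = 1) (hq' : ∀ a, qinv a * q a = 1)
    (hinj : Function.Injective h)
    (hqq : ∀ a b, q a * q b = q b * q (t b a))
    (hhh : ∀ a b, h a * h b = if a = b then h a else 0)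
    (hqh : ∀ a b, q b * h (t b a) = h a * q b) :
    (∀ a b c : X, t c (t b a) = t (t c b) (t c a)) ∧
      ∀ a : X, Function.Bijective (t a) := by
  have cancelL : ∀ (b : X) (x y : A), q b * x = q b * y → x = y := by
    intro b x y hxy
    have := congrArg (qinv b * ·) hxy
    simpa [← mul_assoc, hq' b] using this
  have cancelR : ∀ (b : X) (x y : A), x * q b = y * q b → x = y := by
    intro b x y hxy
    have := congrArg (· * qinv b) hxy
    simpa [mul_assoc, hq b] using this
  constructor
  · intro a b c
    apply hinj
    apply cancelL (t c b)
    apply cancelL c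
    have e1 : q c * (q (t c b) * h (t (t c b) (t c a)))
        = h a * q b * q c := by
      rw [hqh (t c a) (t c b), ← mul_assoc, hqh a c, mul_assoc,
        ← hqq b c, ← mul_assoc]
    have e2 : q c * (q (t c b) * h (t c (t b a)))
        = h a * q b * q c := by
      rw [← mul_assoc, ← hqq b c, mul_assoc, hqh (t b a) c, ← mul_assoc,
        hqh a b]
    rw [e1, e2]
  · intro b
    rw [← Finite.injective_iff_bijective]
    intro a a' haa
    apply hinj
    apply cancelR b
    rw [← hqh a b, ← hqh a' b, haa]
end

section
/- Let k be a field, X a finite set, and A a unital associative k-algebra with a rack algebra structure (invertible q_a, elements h_a with a ↦ h_a injective and h_a h_b = δ_{a,b} h_a, binary operation ▷ with each map b ↦ a ▷ b bijective, relations q_a q_b = q_b q_{b▷a} and q_b h_{b▷a} = h_a q_b). In the triple algebra tensor product A ⊗ A ⊗ A over k, set R₁₂ = Σ_{a∈X} h_a ⊗ q_a ⊗ 1, R₁₃ = Σ_{a∈X} h_a ⊗ 1 ⊗ q_a, and R₂₃ = Σ_{a∈X} 1 ⊗ h_a ⊗ q_a. Then the Yang–Baxter equation holds: R₁₂ R₁₃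 R₂₃ = R₂₃ R₁₃ R₁₂. -/
open TensorProduct

/-- in a rack algebra, the universal rack R-matrix
`R = Σ_a h_a ⊗ q_a` satisfies the Yang–Baxter equation
`R₁₂ R₁₃ R₂₃ = R₂₃ R₁₃ R₁₂` in the triple algebra tensor product `A ⊗ A ⊗ A`. -/
theorem stmt_12 {k X A : Type*} [Field k] [Fintype X] [DecidableEq X]
    [Ring A] [Algebra k A]
    (q qinv h : X → A) (t : X → X → X)
    (hq : ∀ a, q a * qinv a = 1) (hq' : ∀ a, qinv a * q a = 1)
    (hinj : Function.Injective h)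
    (hbij : ∀ a : X, Function.Bijective (t a))
    (hqq : ∀ a b, q a * q b = q b * q (t b a))
    (hhh : ∀ a b, h a * h b = if a = b then h a else 0)
    (hqh : ∀ a b, q b * h (t b a) = h a * q b) :
    (∑ a : X, h a ⊗ₜ[k] (q a ⊗ₜ[k] (1 : A))) *
        (∑ a : X, h a ⊗ₜ[k] ((1 : A) ⊗ₜ[k] q a)) *
        (∑ a : X, (1 : A) ⊗ₜ[k] (h a ⊗ₜ[k] q a)) =
      (∑ a : X, (1 : A) ⊗ₜ[k] (h a ⊗ₜ[k] q a)) *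
        (∑ a : X, h a ⊗ₜ[k] ((1 : A) ⊗ₜ[k] q a)) *
        (∑ a : X, h a ⊗ₜ[k] (q a ⊗ₜ[k] (1 : A))) := by
  have e1 : (∑ a : X, h a ⊗ₜ[k] (q a ⊗ₜ[k] (1 : A))) *
      (∑ a : X, h a ⊗ₜ[k] ((1 : A) ⊗ₜ[k] q a))
      = ∑ a : X, h a ⊗ₜ[k] (q a ⊗ₜ[k] q a) := by
    rw [Finset.sum_mul_sum]
    simp [Algebra.TensorProduct.tmul_mul_tmul, hhh, TensorProduct.ite_tmul]
  have e2 : (∑ a : X, (1 : A) ⊗ₜ[k] (h a ⊗ₜ[k] q a)) *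
      (∑ a : X, h a ⊗ₜ[k] ((1 : A) ⊗ₜ[k] q a)) *
      (∑ a : X, h a ⊗ₜ[k] (q a ⊗ₜ[k] (1 : A)))
      = ∑ c : X, ∑ b : X, h b ⊗ₜ[k] ((h c * q b) ⊗ₜ[k] (q c * q b)) := by
    rw [Finset.sum_mul_sum, Finset.sum_mul]
    simp [Finset.sum_mul, Finset.mul_sum, Algebra.TensorProduct.tmul_mul_tmul, hhh,
      TensorProduct.ite_tmul]
  rw [e1, e2, Finset.sum_mul_sum]
  conv_rhs => rw [Finset.sum_comm]
  simp only [Algebra.TensorProduct.tmul_mul_tmul, one_mul, mul_one]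
  refine Finset.sum_congr rfl fun a _ => ?_
  rw [← Equiv.sum_comp (Equiv.ofBijective _ (hbij a))
      (fun c => h a ⊗ₜ[k] ((q a * h c) ⊗ₜ[k] (q a * q c)))]
  refine Finset.sum_congr rfl fun c _ => ?_
  simp only [Equiv.ofBijective_apply, hqh, ← hqq]
end

section
/- Let k be a field, X a finite set, A a unital associative k-algebra with a rack algebra structure (invertible q_a, elements h_a with a ↦ h_a injective and h_a h_b = δ_{a,b} h_a, binary operation ▷ with each map b ↦ a ▷ b bijective, relations q_a q_b = q_b q_{b▷a} and q_b h_{b▷a} = h_a q_b), and suppose further there is a binary operation • on X with a • b = b • (b ▷ a) for all a, b ∈ X. Let R = Σ_{a∈X} h_a ⊗ q_a ∈ A ⊗ A. Then for every x ∈ X: (1) (q_x ⊗ q_x)·R = R·(q_x ⊗ q_x); (2) with Δ(h_x) := Σ_{(b,c): b•c = x} h_b ⊗ h_c and Δᵒᵖ(h_x) := Σ_{(b,c): b•c = x} h_c ⊗ h_b, one has Δᵒᵖ(h_x)·R = R·Δ(h_x). -/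
open TensorProduct

/-- in a quandle algebra (a rack algebra with a binary operation
`•` on `X` satisfying `a • b = b • (b ▷ a)`), the universal rack R-matrix
`R = Σ_a h_a ⊗ q_a` intertwines the coproducts: `(q_x ⊗ q_x) R = R (q_x ⊗ q_x)`
and `Δᵒᵖ(h_x) R = R Δ(h_x)`, where `Δ(h_x) = Σ_{b•c=x} h_b ⊗ h_c` and
`Δᵒᵖ(h_x) = Σ_{b•c=x} h_c ⊗ h_b`.  Here `t b a` denotes `b ▷ a` and
`bul a b` denotes `a • b`. -/
theorem stmt_14 {k X A : Type*} [Field k] [Fintype X] [DecidableEq X]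
    [Ring A] [Algebra k A]
    (q qinv h : X → A) (t : X → X → X) (bul : X → X → X)
    (hq : ∀ a, q a * qinv a = 1) (hq' : ∀ a, qinv a * q a = 1)
    (hinj : Function.Injective h)
    (hbij : ∀ a : X, Function.Bijective (t a))
    (hqq : ∀ a b, q a * q b = q b * q (t b a))
    (hhh : ∀ a b, h a * h b = if a = b then h a else 0)
    (hqh : ∀ a b, q b * h (t b a) = h a * q b)
    (hbul : ∀ a b, bul a b = bul b (t b a)) :
    ∀ x : X,
      ((q x ⊗ₜ[k] q x) * (∑ a : X, h a ⊗ₜ[k] q a) =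
        (∑ a : X, h a ⊗ₜ[k] q a) * (q x ⊗ₜ[k] q x)) ∧
      ((∑ p ∈ Finset.univ.filter (fun p : X × X => bul p.1 p.2 = x),
            h p.2 ⊗ₜ[k] h p.1) * (∑ a : X, h a ⊗ₜ[k] q a) =
        (∑ a : X, h a ⊗ₜ[k] q a) *
          ∑ p ∈ Finset.univ.filter (fun p : X × X => bul p.1 p.2 = x),
            h p.1 ⊗ₜ[k] h p.2) := by
  intro x
  constructor
  · rw [Finset.mul_sum, Finset.sum_mul,
      ← Equiv.sum_comp (Equiv.ofBijective _ (hbij x))]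
    refine Finset.sum_congr rfl fun a _ => ?_
    simp only [Equiv.ofBijective_apply, Algebra.TensorProduct.tmul_mul_tmul]
    rw [hqh, ← hqq]
  · rw [Finset.sum_mul, Finset.mul_sum]
    have L : ∀ p : X × X,
        (h p.2 ⊗ₜ[k] h p.1) * (∑ a : X, h a ⊗ₜ[k] q a) =
          h p.2 ⊗ₜ[k] (h p.1 * q p.2) := by
      intro p
      rw [Finset.mul_sum]
      rw [Finset.sum_eq_single p.2]
      · rw [Algebra.TensorProduct.tmul_mul_tmul, hhh, if_pos rfl]
      · intro b _ hb
        rw [Algebra.TensorProduct.tmul_mul_tmul, hhh, if_neg (Ne.symm hb),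
          TensorProduct.zero_tmul]
      · intro hmem; exact absurd (Finset.mem_univ p.2) hmem
    have R : ∀ p : X × X,
        (∑ a : X, h a ⊗ₜ[k] q a) * (h p.1 ⊗ₜ[k] h p.2) =
          h p.1 ⊗ₜ[k] (q p.1 * h p.2) := by
      intro p
      rw [Finset.sum_mul]
      rw [Finset.sum_eq_single p.1]
      · rw [Algebra.TensorProduct.tmul_mul_tmul, hhh, if_pos rfl]
      · intro b _ hb
        rw [Algebra.TensorProduct.tmul_mul_tmul, hhh, if_neg hb,
          TensorProduct.zero_tmul]
      · intro hmem; exact absurd (Finset.mem_univ p.1) hmem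
    simp only [L, R]
    refine Finset.sum_bij' (fun p _ => (p.2, t p.2 p.1))
      (fun p _ => ((Equiv.ofBijective _ (hbij p.1)).symm p.2, p.1))
      ?_ ?_ ?_ ?_ ?_
    · intro p hp
      simp only [Finset.mem_filter, Finset.mem_univ, true_and] at hp ⊢
      rw [← hbul]; exact hp
    · intro p hp
      simp only [Finset.mem_filter, Finset.mem_univ, true_and] at hp ⊢
      rw [hbul _ p.1]
      have : t p.1 ((Equiv.ofBijective _ (hbij p.1)).symm p.2) = p.2 :=
        (Equiv.ofBijective _ (hbij p.1)).apply_symm_apply p.2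
      rw [this]; exact hp
    · intro p hp
      simp only
      rw [show ((Equiv.ofBijective _ (hbij p.2)).symm (t p.2 p.1)) = p.1 from
        (Equiv.ofBijective _ (hbij p.2)).symm_apply_apply p.1]
    · intro p hp
      simp only
      rw [show t p.1 ((Equiv.ofBijective _ (hbij p.1)).symm p.2) = p.2 from
        (Equiv.ofBijective _ (hbij p.1)).apply_symm_apply p.2]
    · intro p hp
      simp only
      rw [hqh]
end

section
/- Let k be a field, X a finite set, and A a unital associative k-algebra with a decorated rack algebra structure: invertible elements q_a, w_a ∈ A and elements h_a ∈ A for a ∈ X with a ↦ h_a injective, a binary operation ▷ on X, and maps σ_a, τ_a : X → X with each σ_a bijective, satisfying for all a, b ∈ X: q_a q_b = q_b q_{b▷a}, h_a h_b = δ_{a,b} h_a, q_b h_{b▷a} = h_a q_b, w_a w_b = w_{σ_a(b)} w_{τ_b(a)}, w_a h_b = h_{σ_a(b)} w_a, and w_a q_b = q_{σ_a(b)} w_a. Then for all a, b, c ∈ X: (1) σ_a(σ_b(c)) = σ_{σ_a(b)}(σ_{τ_b(a)}(c)); (2) σ_c(b ▷ a) = σ_c(b) ▷ σ_c(a). -/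
/-- in a decorated rack algebra, the maps `σ`, `τ` and the
operation `▷` satisfy `σ_a(σ_b(c)) = σ_{σ_a(b)}(σ_{τ_b(a)}(c))` and
`σ_c(b ▷ a) = σ_c(b) ▷ σ_c(a)`.  Here `t b a` denotes `b ▷ a`,
`σ a b` denotes `σ_a(b)` and `τ b a` denotes `τ_b(a)`. -/
theorem stmt_15 {k X A : Type*} [Field k] [Fintype X] [DecidableEq X]
    [Ring A] [Algebra k A]
    (q qinv w winv h : X → A) (t : X → X → X) (σ τ : X → X → X)
    (hq : ∀ a, q a * qinv a = 1) (hq' : ∀ a, qinv a * q a = 1)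
    (hw : ∀ a, w a * winv a = 1) (hw' : ∀ a, winv a * w a = 1)
    (hinj : Function.Injective h)
    (hσbij : ∀ a : X, Function.Bijective (σ a))
    (hqq : ∀ a b, q a * q b = q b * q (t b a))
    (hhh : ∀ a b, h a * h b = if a = b then h a else 0)
    (hqh : ∀ a b, q b * h (t b a) = h a * q b)
    (hww : ∀ a b, w a * w b = w (σ a b) * w (τ b a))
    (hwh : ∀ a b, w a * h b = h (σ a b) * w a)
    (hwq : ∀ a b, w a * q b = q (σ a b) * w a) :
    (∀ a b c : X, σ a (σ b c) = σ (σ a b) (σ (τ b a) c)) ∧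
      ∀ a b c : X, σ c (t b a) = t (σ c b) (σ c a) := by
  have rcancel : ∀ (u v x y : A), u * v = 1 → x * u = y * u → x = y := by
    intro u v x y huv hxy
    have h2 := congrArg (· * v) hxy
    simpa [mul_assoc, huv] using h2
  have lcancel : ∀ (u v x y : A), v * u = 1 → u * x = u * y → x = y := by
    intro u v x y huv hxy
    have h2 := congrArg (v * ·) hxy
    simpa [← mul_assoc, huv] using h2
  constructor
  · intro a b c
    apply hinj
    have L : w a * (w b * h c) = h (σ a (σ b c)) * (w a * w b) := by
      rw [hwh, ← mul_assoc, hwh, mul_assoc]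
    have R : w a * (w b * h c) = h (σ (σ a b) (σ (τ b a) c)) * (w a * w b) := by
      rw [← mul_assoc, hww, mul_assoc, hwh, ← mul_assoc, hwh, mul_assoc, ← hww]
    have key : h (σ a (σ b c)) * (w a * w b)
        = h (σ (σ a b) (σ (τ b a) c)) * (w a * w b) := L ▸ R
    refine rcancel (w a * w b) (winv b * winv a) _ _ ?_ key
    calc w a * w b * (winv b * winv a)
        = w a * (w b * winv b) * winv a := by noncomm_ring
      _ = 1 := by rw [hw, mul_one, hw]
  · intro a b c
    apply hinj
    have E : h (σ c a) * q (σ c b) * w c = q (σ c b) * h (σ c (t b a)) * w c := by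
      calc h (σ c a) * q (σ c b) * w c
          = h (σ c a) * (w c * q b) := by rw [hwq]; noncomm_ring
        _ = w c * h a * q b := by rw [hwh]; noncomm_ring
        _ = w c * (q b * h (t b a)) := by rw [hqh]; noncomm_ring
        _ = q (σ c b) * (w c * h (t b a)) := by rw [← mul_assoc, hwq]; noncomm_ring
        _ = q (σ c b) * h (σ c (t b a)) * w c := by rw [hwh]; noncomm_ring
    have E2 : h (σ c a) * q (σ c b) = q (σ c b) * h (σ c (t b a)) :=
      rcancel (w c) (winv c) _ _ (hw c) E
    have E3 : q (σ c b) * h (t (σ c b) (σ c a)) = q (σ c b) * h (σ c (t b a)) := by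
      rw [hqh, E2]
    exact (lcancel (q (σ c b)) (qinv (σ c b)) _ _ (hq' _) E3).symm
end

section
/- Let k be a field, X a finite set, and A a unital associative k-algebra containing invertible elements w_a and elements h_a for a ∈ X with h_a h_b = δ_{a,b} h_a, together with maps σ_a : X → X, each σ_a bijective, satisfying w_a h_b = h_{σ_a(b)} w_a for all a, b ∈ X. In the triple algebra tensor product A ⊗ A ⊗ A over k, define F₁₂ = Σ_{b∈X} h_b ⊗ w_b⁻¹ ⊗ 1, F₂₃ = Σ_{b∈X} 1 ⊗ h_b ⊗ w_b⁻¹, F_{1,23} = Σ_{a∈X} h_a ⊗ w_a⁻¹ ⊗ w_a⁻¹, and F*_{12,3} = Σ_{a,b∈X} h_a ⊗ h_{σ_a(b)} ⊗ w_b⁻¹ w_a⁻¹. Then the twist cocycle identity holds: F₁₂ · F*_{12,3} = F₂₃ · F_{1,23}, and both sides equal Σ_{a,b∈X} h_a ⊗ h_b w_a⁻¹ ⊗ w_b⁻¹ w_a⁻¹. -/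
open TensorProduct

/-- the twist cocycle identity
`F₁₂ · F*₁₂,₃ = F₂₃ · F₁,₂₃ = Σ_{a,b} h_a ⊗ h_b w_a⁻¹ ⊗ w_b⁻¹ w_a⁻¹`
for the set-theoretic Drinfel'd twist `F = Σ_b h_b ⊗ w_b⁻¹` in `A ⊗ A ⊗ A`. -/
theorem stmt_17 {k X A : Type*} [Field k] [Fintype X] [DecidableEq X]
    [Ring A] [Algebra k A]
    (w winv h : X → A) (σ : X → X → X)
    (hw : ∀ a, w a * winv a = 1) (hw' : ∀ a, winv a * w a = 1)
    (hhh : ∀ a b, h a * h b = if a = b then h a else 0)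
    (hσbij : ∀ a : X, Function.Bijective (σ a))
    (hwh : ∀ a b, w a * h b = h (σ a b) * w a) :
    (∑ b : X, h b ⊗ₜ[k] (winv b ⊗ₜ[k] (1 : A))) *
        (∑ a : X, ∑ b : X, h a ⊗ₜ[k] (h (σ a b) ⊗ₜ[k] (winv b * winv a))) =
      (∑ b : X, (1 : A) ⊗ₜ[k] (h b ⊗ₜ[k] winv b)) *
        (∑ a : X, h a ⊗ₜ[k] (winv a ⊗ₜ[k] winv a)) ∧
    (∑ b : X, h b ⊗ₜ[k] (winv b ⊗ₜ[k] (1 : A))) *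
        (∑ a : X, ∑ b : X, h a ⊗ₜ[k] (h (σ a b) ⊗ₜ[k] (winv b * winv a))) =
      ∑ a : X, ∑ b : X, h a ⊗ₜ[k] ((h b * winv a) ⊗ₜ[k] (winv b * winv a)) := by
  have key : ∀ a c, winv a * h (σ a c) = h c * winv a := by
    intro a c
    calc winv a * h (σ a c) = winv a * (h (σ a c) * w a) * winv a := by
            rw [mul_assoc, mul_assoc, hw, mul_one]
      _ = winv a * (w a * h c) * winv a := by rw [hwh]
      _ = h c * winv a := by rw [← mul_assoc, hw', one_mul]
  have hL : (∑ b : X, h b ⊗ₜ[k] (winv b ⊗ₜ[k] (1 : A))) *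
        (∑ a : X, ∑ b : X, h a ⊗ₜ[k] (h (σ a b) ⊗ₜ[k] (winv b * winv a))) =
      ∑ a : X, ∑ b : X, h a ⊗ₜ[k] ((h b * winv a) ⊗ₜ[k] (winv b * winv a)) := by
    calc _ = ∑ b : X, ∑ a : X, ∑ c : X, (h b * h a) ⊗ₜ[k]
              ((winv b * h (σ a c)) ⊗ₜ[k] (winv c * winv a)) := by
          rw [Finset.sum_mul]
          refine Finset.sum_congr rfl fun b _ => ?_
          rw [Finset.mul_sum]
          refine Finset.sum_congr rfl fun a _ => ?_
          rw [Finset.mul_sum]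
          refine Finset.sum_congr rfl fun c _ => ?_
          rw [Algebra.TensorProduct.tmul_mul_tmul, Algebra.TensorProduct.tmul_mul_tmul, one_mul]
      _ = ∑ a : X, ∑ c : X, h a ⊗ₜ[k] ((h c * winv a) ⊗ₜ[k] (winv c * winv a)) := by
          rw [Finset.sum_comm]
          refine Finset.sum_congr rfl fun a _ => ?_
          rw [Finset.sum_comm]
          refine Finset.sum_congr rfl fun c _ => ?_
          rw [Finset.sum_eq_single a]
          · rw [hhh, if_pos rfl, key]
          · intro b _ hba
            rw [hhh, if_neg hba, TensorProduct.zero_tmul]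
          · intro ha; exact absurd (Finset.mem_univ a) ha
  have hR : (∑ b : X, (1 : A) ⊗ₜ[k] (h b ⊗ₜ[k] winv b)) *
        (∑ a : X, h a ⊗ₜ[k] (winv a ⊗ₜ[k] winv a)) =
      ∑ a : X, ∑ b : X, h a ⊗ₜ[k] ((h b * winv a) ⊗ₜ[k] (winv b * winv a)) := by
    calc _ = ∑ b : X, ∑ a : X, h a ⊗ₜ[k] ((h b * winv a) ⊗ₜ[k] (winv b * winv a)) := by
          rw [Finset.sum_mul]
          refine Finset.sum_congr rfl fun b _ => ?_
          rw [Finset.mul_sum]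
          refine Finset.sum_congr rfl fun a _ => ?_
          rw [Algebra.TensorProduct.tmul_mul_tmul, Algebra.TensorProduct.tmul_mul_tmul, one_mul]
      _ = _ := Finset.sum_comm
  exact ⟨hL.trans hR.symm, hL⟩
end

section
/- Let (X, ∘) be a group, for each a ∈ X let σ_a : X → X be a bijection, let ▷ be a binary operation on X, and define τ_b(a) := σ_{σ_a(b)}⁻¹(σ_a(b) ▷ a). Assume a ∘ b = σ_a(b) ∘ τ_b(a) for all a, b ∈ X. Fix ξ ∈ X and define a • b := a ∘ σ_a⁻¹(b) ∘ ξ. Then for all a, b ∈ X: (1) a • b = b • (b ▷ a); (2) a • σ_a(b) = a ∘ b ∘ ξ. -/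
/-- let `(X, ∘)` be a group (written `*`), `σ_a` bijections with
inverses `σinv a`, `▷` a binary operation (written `t`), and
`τ_b(a) := σ_{σ_a(b)}⁻¹(σ_a(b) ▷ a)`; assume the structure-group condition
`a ∘ b = σ_a(b) ∘ τ_b(a)`.  With `a • b := a ∘ σ_a⁻¹(b) ∘ ξ` for a fixed
`ξ ∈ X`, one has `a • b = b • (b ▷ a)` and `a • σ_a(b) = a ∘ b ∘ ξ`. -/
theorem stmt_18 {X : Type*} [Group X]
    (σ σinv : X → X → X)
    (hσ : ∀ a b, σ a (σinv a b) = b) (hσ' : ∀ a b, σinv a (σ a b) = b)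
    (t : X → X → X) (τ : X → X → X)
    (hτ : ∀ b a, τ b a = σinv (σ a b) (t (σ a b) a))
    (hstruct : ∀ a b, a * b = σ a b * τ b a)
    (ξ : X) (bul : X → X → X)
    (hbul : ∀ a b, bul a b = a * σinv a b * ξ) :
    ∀ a b : X, bul a b = bul b (t b a) ∧ bul a (σ a b) = a * b * ξ := by
  intro a b
  constructor
  · have h := hstruct a (σinv a b)
    rw [hσ, hτ, hσ] at h
    rw [hbul, hbul, h]
  · rw [hbul, hσ']
end

section
/- Let (X, ∘) be a group and for each a ∈ X let σ_a : X → X be a bijection. Define τ_b(a) := σ_a(b)⁻¹ ∘ a ∘ b (inverse in (X,∘)), so that a ∘ b = σ_a(b) ∘ τ_b(a), and assume the involutivity condition σ_{σ_a(b)}(τ_b(a)) = a holds for all a, b ∈ X. Then the operation a + b := a ∘ σ_a⁻¹(b) is commutative: a ∘ σ_a⁻¹(b) = b ∘ σ_b⁻¹(a) for all a, b ∈ X. -/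
/-- let `(X, ∘)` be a group (written `*`), `σ_a` bijections with
inverses `σinv a`, and `τ_b(a) := σ_a(b)⁻¹ ∘ a ∘ b` (so that
`a ∘ b = σ_a(b) ∘ τ_b(a)`).  If the involutivity condition
`σ_{σ_a(b)}(τ_b(a)) = a` holds for all `a, b`, then the operation
`a + b := a ∘ σ_a⁻¹(b)` is commutative: `a ∘ σ_a⁻¹(b) = b ∘ σ_b⁻¹(a)`. -/
theorem stmt_19 {X : Type*} [Group X]
    (σ σinv : X → X → X)
    (hσ : ∀ a b, σ a (σinv a b) = b) (hσ' : ∀ a b, σinv a (σ a b) = b)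
    (τ : X → X → X)
    (hτ : ∀ b a, τ b a = (σ a b)⁻¹ * a * b)
    (hinvol : ∀ a b, σ (σ a b) (τ b a) = a) :
    ∀ a b : X, a * σinv a b = b * σinv b a := by
  intro a b
  have h1 : σ b (τ (σinv a b) a) = a := by
    have := hinvol a (σinv a b); rwa [hσ] at this
  have h2 := congrArg (σinv b) h1
  rw [hσ'] at h2
  rw [← h2, hτ, hσ]
  group
end
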